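/- Let g ∈ k[x₁,x₂,x₃] and let p ∈ V(g) ⊆ 𝔸³(k) be a smooth non-flexy point of the hypersurface V(g). Then the number of lines l ⊆ 𝔸³ through p with I_p(l, V(g)) ≥ 3 is either one or two. -/
import Mathlib


/-- The restriction of a polynomial `g` to the parametrized line `t ↦ p + t • w`,
as a polynomial in `t`. -/
noncomputable def lineEval {k : Type*} [Field k] {n : ℕ} (g : MvPolynomial (Fin n) k)
    (p w : Fin n → k) : Polynomial k :=
  MvPolynomial.aeval (fun i => Polynomial.C (p i) + Polynomial.C (w i) * Polynomial.X) g

section Helpers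

open MvPolynomial

variable {k : Type*} [Field k]

lemma coeff_prod_of_natDegree_le' {ι : Type*} (s : Finset ι) (f : ι → Polynomial k) (d : ι → ℕ)
    (h : ∀ i ∈ s, (f i).natDegree ≤ d i) :
    (∏ i ∈ s, f i).coeff (∑ i ∈ s, d i) = ∏ i ∈ s, (f i).coeff (d i) := by
  induction s using Finset.cons_induction with
  | empty => simp
  | cons a s ha ih =>
    rw [Finset.prod_cons, Finset.sum_cons,
      Polynomial.coeff_mul_add_eq_of_natDegree_le (h a (Finset.mem_cons_self a s))
        ((Polynomial.natDegree_prod_le _ _).trans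
          (Finset.sum_le_sum fun i hi => h i (Finset.mem_cons_of_mem hi))),
      Finset.prod_cons, ih (fun i hi => h i (Finset.mem_cons_of_mem hi))]

/-- eval of lineEval -/
lemma lineEval_eval {n : ℕ} (g : MvPolynomial (Fin n) k) (p w : Fin n → k) (t : k) :
    (lineEval g p w).eval t = MvPolynomial.eval (fun i => p i + w i * t) g := by
  have : (Polynomial.evalRingHom t).comp
      ((MvPolynomial.aeval (fun i => Polynomial.C (p i) + Polynomial.C (w i) * Polynomial.X)
        : MvPolynomial (Fin n) k →ₐ[k] Polynomial k) : MvPolynomial (Fin n) k →+* Polynomial k)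
      = (MvPolynomial.eval (fun i => p i + w i * t)) := by
    apply MvPolynomial.ringHom_ext <;> simp
  exact congrFun (congrArg DFunLike.coe this) g

lemma degree_eq_sum_univ {n : ℕ} (d : Fin n →₀ ℕ) : d.degree = ∑ i, d i := by
  unfold Finsupp.degree
  exact Finset.sum_subset (Finset.subset_univ _)
    (fun i _ hi => Finsupp.notMem_support_iff.mp hi)

lemma coeff_aeval_CX {n : ℕ} (h : MvPolynomial (Fin n) k) (w : Fin n → k) (m : ℕ) :
    (MvPolynomial.aeval (fun i => Polynomial.C (w i) * Polynomial.X) h).coeff m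
      = MvPolynomial.eval w (homogeneousComponent m h) := by
  rw [MvPolynomial.aeval_def, MvPolynomial.eval₂_eq', homogeneousComponent_apply,
    map_sum, Polynomial.finset_sum_coeff, Finset.sum_filter]
  apply Finset.sum_congr rfl
  intro d _
  have hprod : (∏ i, (Polynomial.C (w i) * Polynomial.X) ^ d i)
      = Polynomial.C (∏ i, w i ^ d i) * Polynomial.X ^ (∑ i, d i) := by
    simp_rw [mul_pow, ← Polynomial.C_pow]
    rw [Finset.prod_mul_distrib, ← map_prod, Finset.prod_pow_eq_pow_sum]
  rw [Polynomial.algebraMap_eq, hprod, ← mul_assoc, ← Polynomial.C_mul,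
    Polynomial.coeff_C_mul, Polynomial.coeff_X_pow, MvPolynomial.eval_monomial,
    degree_eq_sum_univ, Finsupp.prod_pow]
  by_cases hm : m = ∑ i, d i
  · simp [hm]
  · simp [hm, Ne.symm hm]

lemma coeff_lineEval {n : ℕ} (g : MvPolynomial (Fin n) k) (p w : Fin n → k) (m : ℕ) :
    (lineEval g p w).coeff m
      = MvPolynomial.eval w (homogeneousComponent m
          (MvPolynomial.aeval (fun i => X i + MvPolynomial.C (p i)) g)) := by
  rw [← coeff_aeval_CX]
  congr 1
  have : ((MvPolynomial.aeval (fun i => Polynomial.C (w i) * Polynomial.X) :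
        MvPolynomial (Fin n) k →ₐ[k] Polynomial k).comp
      (MvPolynomial.aeval (fun i => X i + MvPolynomial.C (p i)) :
        MvPolynomial (Fin n) k →ₐ[k] MvPolynomial (Fin n) k))
      = MvPolynomial.aeval (fun i => Polynomial.C (p i) + Polynomial.C (w i) * Polynomial.X) := by
    apply MvPolynomial.algHom_ext
    intro i
    simp [add_comm]
  rw [lineEval, ← this]
  rfl

lemma coeff_lineEval_top {n : ℕ} {φ : MvPolynomial (Fin n) k} {m : ℕ}
    (hφ : φ.IsHomogeneous m) (u w : Fin n → k) :
    (lineEval φ u w).coeff m = MvPolynomial.eval w φ := by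
  have hlin : ∀ i : Fin n, (Polynomial.C (u i) + Polynomial.C (w i) * Polynomial.X).natDegree ≤ 1 := by
    intro i
    refine (Polynomial.natDegree_add_le _ _).trans ?_
    simp only [Polynomial.natDegree_C, max_le_iff]
    exact ⟨Nat.zero_le _, (Polynomial.natDegree_C_mul_le _ _).trans (by simp)⟩
  rw [lineEval, MvPolynomial.aeval_def, MvPolynomial.eval₂_eq',
    Polynomial.finset_sum_coeff, MvPolynomial.eval_eq']
  apply Finset.sum_congr rfl
  intro d hd
  have hdeg : (∑ i, d i) = m := by
    rw [← degree_eq_sum_univ, Finsupp.degree_eq_weight_one]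
    exact hφ (MvPolynomial.mem_support_iff.mp hd)
  rw [Polynomial.algebraMap_eq, Polynomial.coeff_C_mul, ← hdeg,
    coeff_prod_of_natDegree_le' _ _ d
      (fun i _ => (Polynomial.natDegree_pow_le).trans (by
        simpa using Nat.mul_le_mul_left (d i) (hlin i)))]
  congr 1
  apply Finset.prod_congr rfl
  intro i _
  have := Polynomial.coeff_pow_of_natDegree_le (p := Polynomial.C (u i) + Polynomial.C (w i) * Polynomial.X) (n := 1) (m := d i) (hlin i)
  rw [mul_one] at this
  rw [this]
  congr 1
  simp

lemma eval_smul_homog {n : ℕ} {φ : MvPolynomial (Fin n) k} {m : ℕ}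
    (hφ : φ.IsHomogeneous m) (s : k) (w : Fin n → k) :
    MvPolynomial.eval (s • w) φ = s ^ m * MvPolynomial.eval w φ := by
  rw [MvPolynomial.eval_eq', MvPolynomial.eval_eq', Finset.mul_sum]
  apply Finset.sum_congr rfl
  intro d hd
  have hdeg : (∑ i, d i) = m := by
    rw [← degree_eq_sum_univ, Finsupp.degree_eq_weight_one]
    exact hφ (MvPolynomial.mem_support_iff.mp hd)
  have : ∀ i : Fin n, (s • w) i = s * w i := fun i => rfl
  simp_rw [this, mul_pow, Finset.prod_mul_distrib, Finset.prod_pow_eq_pow_sum, hdeg]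
  ring

lemma X_dvd_of_eval_zero [Infinite k] {n : ℕ} (i : Fin n) (φ : MvPolynomial (Fin n) k)
    (h : ∀ y : Fin n → k, y i = 0 → MvPolynomial.eval y φ = 0) :
    MvPolynomial.X i ∣ φ := by
  classical
  set g : Fin n → MvPolynomial (Fin n) k := fun j => if j = i then 0 else MvPolynomial.X j with hg
  have hφ₀ : MvPolynomial.aeval g φ = 0 := by
    apply MvPolynomial.funext
    intro y
    have hcomp : (MvPolynomial.eval y).comp
        ((MvPolynomial.aeval g : MvPolynomial (Fin n) k →ₐ[k] MvPolynomial (Fin n) k) :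
          MvPolynomial (Fin n) k →+* MvPolynomial (Fin n) k)
        = MvPolynomial.eval (fun j => if j = i then 0 else y j) := by
      apply MvPolynomial.ringHom_ext
      · intro r; simp
      · intro j
        by_cases hj : j = i <;> simp [hg, hj]
    have h2 := congrFun (congrArg DFunLike.coe hcomp) φ
    simp only [RingHom.coe_comp, Function.comp_apply, AlgHom.coe_ringHom_mk,
      RingHom.coe_coe] at h2
    rw [h2, h _ (by simp), map_zero]
  have hsum : MvPolynomial.aeval g φ
      = ∑ v ∈ φ.support, if v i = 0 then MvPolynomial.monomial v (MvPolynomial.coeff v φ) else 0 := by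
    conv_lhs => rw [φ.as_sum, map_sum]
    apply Finset.sum_congr rfl
    intro v _
    rw [MvPolynomial.aeval_monomial]
    by_cases hv : v i = 0
    · rw [if_pos hv, MvPolynomial.monomial_eq]
      congr 1
      apply Finsupp.prod_congr
      intro j hj
      have : j ≠ i := fun hji => by
        subst hji; exact (Finsupp.mem_support_iff.mp hj) hv
      simp [hg, this]
    · rw [if_neg hv]
      have : i ∈ v.support := Finsupp.mem_support_iff.mpr hv
      rw [Finsupp.prod]
      rw [Finset.prod_eq_zero this (by simp [hg, zero_pow hv])]
      ring
  rw [MvPolynomial.X_dvd_iff_modMonomial_eq_zero]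
  ext d
  rcases le_or_gt 1 (d i) with hd | hd
  · rw [MvPolynomial.coeff_modMonomial_of_le _ (by simpa using Finsupp.single_le_iff.mpr hd)]
    simp
  · have hdi : d i = 0 := by omega
    rw [MvPolynomial.coeff_modMonomial_of_not_le _ (by
      simp only [Finsupp.single_le_iff]; omega), MvPolynomial.coeff_zero]
    have h1 : MvPolynomial.coeff d (MvPolynomial.aeval g φ) = MvPolynomial.coeff d φ := by
      rw [hsum, MvPolynomial.coeff_sum]
      have hterm : ∀ v ∈ φ.support,
          MvPolynomial.coeff d (if v i = 0 then MvPolynomial.monomial v (MvPolynomial.coeff v φ) else 0)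
          = if v = d then MvPolynomial.coeff v φ else 0 := by
        intro v _
        by_cases hv : v = d
        · subst hv
          simp [hdi]
        · by_cases hv0 : v i = 0 <;> simp [hv0, MvPolynomial.coeff_monomial, hv]
      rw [Finset.sum_congr rfl hterm, Finset.sum_ite_eq' φ.support d]
      by_cases hdm : d ∈ φ.support
      · simp [hdm]
      · simp [hdm, MvPolynomial.notMem_support_iff.mp hdm]
    rw [← h1, hφ₀, MvPolynomial.coeff_zero]

noncomputable def subLin {n : ℕ} (f : (Fin n → k) →ₗ[k] (Fin n → k)) :
    MvPolynomial (Fin n) k →ₐ[k] MvPolynomial (Fin n) k :=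
  MvPolynomial.aeval (fun i => ∑ j, MvPolynomial.C (f (Pi.single j 1) i) * MvPolynomial.X j)

lemma eval_subLin {n : ℕ} (f : (Fin n → k) →ₗ[k] (Fin n → k)) (φ : MvPolynomial (Fin n) k)
    (y : Fin n → k) :
    MvPolynomial.eval y (subLin f φ) = MvPolynomial.eval (f y) φ := by
  have hcomp : (MvPolynomial.eval y).comp
      ((subLin f : MvPolynomial (Fin n) k →ₐ[k] MvPolynomial (Fin n) k) :
        MvPolynomial (Fin n) k →+* MvPolynomial (Fin n) k)
      = MvPolynomial.eval (f y) := by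
    apply MvPolynomial.ringHom_ext
    · intro r; simp [subLin]
    · intro i
      have hy : f y = ∑ j, y j • f (Pi.single j 1) := by
        have harg : ∀ j : Fin n, (fun j1 => if j = j1 then (1:k) else 0) = Pi.single j 1 := by
          intro j; ext x; simp [Pi.single_apply, eq_comm]
        conv_lhs => rw [pi_eq_sum_univ y, map_sum]
        simp_rw [map_smul, harg]
      simp only [RingHom.coe_comp, Function.comp_apply, RingHom.coe_coe, subLin,
        MvPolynomial.aeval_X, map_sum, map_mul, MvPolynomial.eval_C, MvPolynomial.eval_X]
      rw [hy]
      simp [Finset.sum_apply, mul_comm]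
  have h2 := congrFun (congrArg DFunLike.coe hcomp) φ
  simpa using h2

lemma subLin_subLin [Infinite k] {n : ℕ} (e : (Fin n → k) ≃ₗ[k] (Fin n → k))
    (φ : MvPolynomial (Fin n) k) :
    subLin (e.symm.toLinearMap) (subLin e.toLinearMap φ) = φ := by
  apply MvPolynomial.funext
  intro y
  rw [eval_subLin, eval_subLin]
  simp

lemma dvd_of_eval_eq_mul [Infinite k] (L Q : MvPolynomial (Fin 3) k)
    (e : (Fin 3 → k) ≃ₗ[k] (Fin 3 → k)) (c : k) (hc : c ≠ 0)
    (hL : ∀ y : Fin 3 → k, MvPolynomial.eval (e y) L = c * y 2)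
    (hQ : ∀ y : Fin 3 → k, y 2 = 0 → MvPolynomial.eval (e y) Q = 0) :
    L ∣ Q := by
  have hψL : subLin e.toLinearMap L = MvPolynomial.C c * MvPolynomial.X 2 := by
    apply MvPolynomial.funext
    intro y
    rw [eval_subLin]
    simp [hL y]
  have hψQ : MvPolynomial.X 2 ∣ subLin e.toLinearMap Q := by
    apply X_dvd_of_eval_zero
    intro y hy
    rw [eval_subLin]
    exact hQ y hy
  obtain ⟨D, hD⟩ := hψQ
  have hdvd : subLin e.toLinearMap L ∣ subLin e.toLinearMap Q := by
    refine ⟨MvPolynomial.C c⁻¹ * D, ?_⟩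
    rw [hψL, hD]
    rw [mul_comm (MvPolynomial.C c) (MvPolynomial.X 2), mul_assoc, ← mul_assoc (MvPolynomial.C c),
      ← map_mul, mul_inv_cancel₀ hc]
    simp
  have := map_dvd (subLin e.symm.toLinearMap) hdvd
  rwa [subLin_subLin, subLin_subLin] at this

lemma degree_one_classify {n : ℕ} (d : Fin n →₀ ℕ) (h : d.degree = 1) :
    ∃ i, d = Finsupp.single i 1 := by
  rw [degree_eq_sum_univ] at h
  have hex : ∃ i, d i ≠ 0 := by
    by_contra hc
    push_neg at hc
    simp [hc] at h
  obtain ⟨i, hi⟩ := hex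
  have h1 : d i ≤ 1 := h ▸ Finset.single_le_sum (fun j _ => Nat.zero_le (d j)) (Finset.mem_univ i)
  have hdi : d i = 1 := by omega
  refine ⟨i, ?_⟩
  ext j
  rcases eq_or_ne j i with rfl | hj
  · simp [hdi]
  · have hrest : ∑ j ∈ Finset.univ.erase i, d j = 0 := by
      have := Finset.add_sum_erase Finset.univ d (Finset.mem_univ i)
      omega
    have := (Finset.sum_eq_zero_iff).mp hrest j (Finset.mem_erase.mpr ⟨hj, Finset.mem_univ j⟩)
    simp [Finsupp.single_apply, Ne.symm hj, this]

lemma homog_one_eq {n : ℕ} {L : MvPolynomial (Fin n) k} (hL : L.IsHomogeneous 1) :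
    L = ∑ i, MvPolynomial.C (MvPolynomial.coeff (Finsupp.single i 1) L) * MvPolynomial.X i := by
  apply MvPolynomial.ext
  intro d
  rw [MvPolynomial.coeff_sum]
  simp_rw [MvPolynomial.coeff_C_mul, MvPolynomial.coeff_X']
  by_cases hd : d.degree = 1
  · obtain ⟨i₀, rfl⟩ := degree_one_classify d hd
    rw [Finset.sum_eq_single i₀]
    · simp
    · intro j _ hj
      rw [if_neg (by
        intro hc
        exact hj (Finsupp.single_left_inj one_ne_zero |>.mp hc)), mul_zero]
    · intro hc; exact absurd (Finset.mem_univ i₀) hc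
  · rw [hL.coeff_eq_zero hd]
    rw [Finset.sum_eq_zero]
    intro j _
    rw [if_neg, mul_zero]
    intro hc
    apply hd
    rw [← hc, degree_eq_sum_univ]
    simp [Finsupp.single_apply, Finset.sum_ite_eq]

lemma natDegree_lineEval_le {n : ℕ} (φ : MvPolynomial (Fin n) k) (u w : Fin n → k) :
    (lineEval φ u w).natDegree ≤ φ.totalDegree := by
  rw [lineEval, MvPolynomial.aeval_def, MvPolynomial.eval₂_eq']
  apply Polynomial.natDegree_sum_le_of_forall_le
  intro d hd
  have hood : ∑ i, d i ≤ φ.totalDegree := by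
    have h1 := MvPolynomial.le_totalDegree hd
    rw [show (d.sum fun _ e => e) = d.degree from rfl, degree_eq_sum_univ] at h1
    exact h1
  refine le_trans ?_ hood
  refine (Polynomial.natDegree_mul_le).trans ?_
  rw [Polynomial.algebraMap_eq, Polynomial.natDegree_C, zero_add]
  refine (Polynomial.natDegree_prod_le _ _).trans ?_
  apply Finset.sum_le_sum
  intro i _
  refine (Polynomial.natDegree_pow_le).trans ?_
  have hlin : (Polynomial.C (u i) + Polynomial.C (w i) * Polynomial.X).natDegree ≤ 1 := by
    refine (Polynomial.natDegree_add_le _ _).trans ?_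
    simp only [Polynomial.natDegree_C, max_le_iff]
    exact ⟨Nat.zero_le _, (Polynomial.natDegree_C_mul_le _ _).trans (by simp)⟩
  calc d i * (Polynomial.C (u i) + Polynomial.C (w i) * Polynomial.X).natDegree
      ≤ d i * 1 := Nat.mul_le_mul_left _ hlin
    _ = d i := mul_one _

end Helpers

open MvPolynomial in
/-- Let `g ∈ k[x₁,x₂,x₃]` and let `p ∈ V(g)` be a smooth non-flexy point of the
hypersurface `V(g)`: after translating `p` to the origin and writing
`g(x + p) = g₁ + g₂ + ⋯` with `gᵢ` homogeneous of degree `i`, we have `g₁ ≠ 0` (smooth)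
and `g₁ ∤ g₂` (non-flexy).  Then the number of lines `l ⊆ 𝔸³` through `p` with
`I_p(l, V(g)) ≥ 3` (identified with the spanning lines `span {w}` of their direction
vectors) is either one or two. -/
theorem lines_with_contact_three_at_nonflexy_point {k : Type*} [Field k] [IsAlgClosed k]
    (g : MvPolynomial (Fin 3) k) (p : Fin 3 → k) (hp : eval p g = 0)
    (hsmooth : homogeneousComponent 1
      (aeval (fun i => X i + C (p i)) g) ≠ 0)
    (hnonflexy : ¬ homogeneousComponent 1 (aeval (fun i => X i + C (p i)) g) ∣
      homogeneousComponent 2 (aeval (fun i => X i + C (p i)) g)) :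
    {L : Submodule k (Fin 3 → k) | ∃ w : Fin 3 → k, w ≠ 0 ∧ L = Submodule.span k {w} ∧
        Polynomial.X ^ 3 ∣ lineEval g p w}.ncard = 1 ∨
    {L : Submodule k (Fin 3 → k) | ∃ w : Fin 3 → k, w ≠ 0 ∧ L = Submodule.span k {w} ∧
        Polynomial.X ^ 3 ∣ lineEval g p w}.ncard = 2 := by
  classical
  set L := homogeneousComponent 1 (aeval (fun i => X i + C (p i)) g) with hLdef
  set Q := homogeneousComponent 2 (aeval (fun i => X i + C (p i)) g) with hQdef
  have hLhom : L.IsHomogeneous 1 := homogeneousComponent_isHomogeneous 1 _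
  have hQhom : Q.IsHomogeneous 2 := homogeneousComponent_isHomogeneous 2 _
  -- characterization of the divisibility condition
  have hchar : ∀ w : Fin 3 → k, (Polynomial.X ^ 3 ∣ lineEval g p w) ↔
      (eval w L = 0 ∧ eval w Q = 0) := by
    intro w
    rw [Polynomial.X_pow_dvd_iff]
    constructor
    · intro hall
      exact ⟨by rw [hLdef, ← coeff_lineEval]; exact hall 1 (by norm_num),
             by rw [hQdef, ← coeff_lineEval]; exact hall 2 (by norm_num)⟩
    · rintro ⟨h1, h2⟩ d hd
      interval_cases d
      · rw [Polynomial.coeff_zero_eq_eval_zero, lineEval_eval]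
        simpa using hp
      · rw [coeff_lineEval]; exact h1
      · rw [coeff_lineEval]; exact h2
  -- the linear functional
  set cf : Fin 3 → k := fun i => coeff (Finsupp.single i 1) L with hcf
  have hLeq : L = ∑ i, MvPolynomial.C (cf i) * X i := homog_one_eq hLhom
  set ℓ : (Fin 3 → k) →ₗ[k] k := ∑ i, cf i • LinearMap.proj i with hldef
  have hleval : ∀ w, eval w L = ℓ w := by
    intro w
    rw [hLeq]
    simp [hldef, LinearMap.sum_apply, LinearMap.smul_apply, LinearMap.proj_apply,
      smul_eq_mul]
  have hlne : ℓ ≠ 0 := by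
    intro h0
    apply hsmooth
    rw [hLeq]
    have hci : ∀ i, cf i = 0 := by
      intro i
      have h1 := congrFun (congrArg DFunLike.coe h0) (Pi.single i 1)
      simpa [hldef, LinearMap.sum_apply, LinearMap.smul_apply, LinearMap.proj_apply,
        Pi.single_apply, smul_eq_mul, Finset.sum_ite_eq] using h1
    simp [hci]
  have hexz : ∃ z, ℓ z ≠ 0 := by
    by_contra hcon
    push_neg at hcon
    exact hlne (LinearMap.ext fun x => hcon x)
  obtain ⟨z, hz⟩ := hexz
  have hsurj : Function.Surjective ℓ := by
    intro a
    refine ⟨(a * (ℓ z)⁻¹) • z, ?_⟩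
    rw [map_smul, smul_eq_mul]
    field_simp
  have hrank : Module.finrank k (LinearMap.ker ℓ) = 2 := by
    have h1 := LinearMap.finrank_range_add_finrank_ker ℓ
    rw [LinearMap.range_eq_top.mpr hsurj, finrank_top, Module.finrank_self,
      Module.finrank_fin_fun] at h1
    omega
  have hbasis : ∃ u v : Fin 3 → k, ℓ u = 0 ∧ ℓ v = 0 ∧
      (∀ a e : k, a • u + e • v = 0 → a = 0 ∧ e = 0) ∧
      (∀ w : Fin 3 → k, ℓ w = 0 → ∃ a e : k, w = a • u + e • v) := by
    have b := Module.finBasisOfFinrankEq k (LinearMap.ker ℓ) hrank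
    refine ⟨(b 0 : Fin 3 → k), (b 1 : Fin 3 → k),
      LinearMap.mem_ker.mp (b 0).2, LinearMap.mem_ker.mp (b 1).2, ?_, ?_⟩
    · intro a e hae
      have hK : a • (b 0) + e • (b 1) = (0 : LinearMap.ker ℓ) := by
        apply Subtype.ext
        rw [Submodule.coe_add, Submodule.coe_smul, Submodule.coe_smul, ZeroMemClass.coe_zero]
        exact hae
      have h2 := Fintype.linearIndependent_iff.mp b.linearIndependent ![a, e] (by
        rw [Fin.sum_univ_two]
        rw [show (![a, e] 0 : k) = a from rfl, show (![a, e] 1 : k) = e from rfl]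
        exact hK)
      exact ⟨h2 0, h2 1⟩
    · intro w hw
      refine ⟨b.repr ⟨w, hw⟩ 0, b.repr ⟨w, hw⟩ 1, ?_⟩
      have h1 := b.sum_repr ⟨w, hw⟩
      rw [Fin.sum_univ_two] at h1
      have h2 := congrArg (Subtype.val) h1
      rw [Submodule.coe_add, Submodule.coe_smul, Submodule.coe_smul] at h2
      exact h2.symm
  obtain ⟨u, v, hu, hv, hindep2, hdecomp⟩ := hbasis
  -- Q does not vanish identically on the kernel
  have hQK : ¬ ∀ w : Fin 3 → k, ℓ w = 0 → eval w Q = 0 := by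
    intro hvan
    apply hnonflexy
    have hindep3 : LinearIndependent k ![u, v, z] := by
      rw [Fintype.linearIndependent_iff]
      intro gco hg
      rw [Fin.sum_univ_three] at hg
      simp only [Matrix.cons_val_zero, Matrix.cons_val_one, Matrix.head_cons,
        Matrix.cons_val_two, Matrix.tail_cons] at hg
      have hg2 : gco 2 = 0 := by
        have h3 := congrArg ℓ hg
        simp only [map_add, map_smul, hu, hv, smul_eq_mul, mul_zero, zero_add, add_zero,
          map_zero] at h3
        exact (mul_eq_zero.mp h3).resolve_right hz
      have h4 := hindep2 (gco 0) (gco 1) (by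
        rw [hg2] at hg
        simpa using hg)
      intro i
      fin_cases i
      · exact h4.1
      · exact h4.2
      · exact hg2
    have hcard : Fintype.card (Fin 3) = Module.finrank k (Fin 3 → k) := by
      simp [Module.finrank_fin_fun]
    set B := basisOfLinearIndependentOfCardEqFinrank hindep3 hcard with hB
    have hBi : ∀ i, B i = ![u, v, z] i := fun i =>
      congrFun (coe_basisOfLinearIndependentOfCardEqFinrank hindep3 hcard) i
    set e := (Pi.basisFun k (Fin 3)).equiv B (Equiv.refl _) with he
    have heapp : ∀ y : Fin 3 → k, e y = y 0 • u + y 1 • v + y 2 • z := by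
      intro y
      have hy : y = ∑ j, y j • (Pi.basisFun k (Fin 3)) j := by
        funext x
        simp [Pi.basisFun_apply, Finset.sum_apply, Pi.single_apply, Finset.sum_ite_eq]
      conv_lhs => rw [hy]
      rw [map_sum]
      simp_rw [map_smul, he, Module.Basis.equiv_apply, Equiv.refl_apply]
      rw [Fin.sum_univ_three, hBi 0, hBi 1, hBi 2]
      simp
    apply dvd_of_eval_eq_mul L Q e (ℓ z) hz
    · intro y
      rw [hleval, heapp]
      simp only [map_add, map_smul, hu, hv, smul_eq_mul, mul_zero, zero_add, add_zero]
      ring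
    · intro y hy
      apply hvan
      rw [heapp, hy]
      simp [map_add, map_smul, hu, hv]
  -- the polynomial q
  set q := lineEval Q u v with hqdef
  have hqeval : ∀ t, q.eval t = eval (u + t • v) Q := by
    intro t
    have harg : (fun i => u i + v i * t) = u + t • v := by
      funext i
      simp [mul_comm]
    rw [hqdef, lineEval_eval, harg]
  have hqdeg : q.natDegree ≤ 2 := (natDegree_lineEval_le Q u v).trans hQhom.totalDegree_le
  have hqc2 : q.coeff 2 = eval v Q := coeff_lineEval_top hQhom u v
  have hscale : ∀ (s : k) (w : Fin 3 → k), eval (s • w) Q = s ^ 2 * eval w Q :=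
    fun s w => eval_smul_homog hQhom s w
  have hq0 : q ≠ 0 := by
    intro h0
    have hvQ : eval v Q = 0 := by
      set r := lineEval Q v u with hrdef
      have hreval : ∀ t, r.eval t = eval (v + t • u) Q := by
        intro t
        have harg : (fun i => v i + u i * t) = v + t • u := by
          funext i
          simp [mul_comm]
        rw [hrdef, lineEval_eval, harg]
      have hr0 : r = 0 := by
        apply Polynomial.eq_zero_of_infinite_isRoot
        apply Set.Infinite.mono (s := {x : k | x ≠ 0})
        · intro t ht
          have htne : (t : k) ≠ 0 := ht
          have hvt : v + t • u = t • (u + t⁻¹ • v) := by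
            rw [smul_add, smul_smul, mul_inv_cancel₀ htne]
            module
          show r.IsRoot t
          rw [Polynomial.IsRoot, hreval, hvt, hscale, ← hqeval, h0]
          simp
        · have h5 : ({0}ᶜ : Set k).Infinite := (Set.finite_singleton 0).infinite_compl
          have h6 : ({0}ᶜ : Set k) = {x : k | x ≠ 0} := by
            ext x
            simp
          rwa [h6] at h5
      have := hreval 0
      rw [hr0] at this
      simpa using this.symm
    apply hQK
    intro w hw
    obtain ⟨a, e', rfl⟩ := hdecomp w hw
    rcases eq_or_ne a 0 with rfl | ha
    · rw [zero_smul, zero_add, hscale, hvQ, mul_zero]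
    · have hrw : a • u + e' • v = a • (u + (a⁻¹ * e') • v) := by
        rw [smul_add, smul_smul, ← mul_assoc, mul_inv_cancel₀ ha, one_mul]
      rw [hrw, hscale, ← hqeval, h0]
      simp
  -- geometry of the lines
  set Φ : k → Submodule k (Fin 3 → k) := fun t => Submodule.span k {u + t • v} with hΦ
  have hune : ∀ t : k, u + t • v ≠ 0 := by
    intro t hc0
    have h1 := hindep2 1 t (by rw [one_smul]; exact hc0)
    exact one_ne_zero h1.1
  have hvne : v ≠ 0 := by
    intro h0
    have h1 := hindep2 0 1 (by simp [h0])
    exact one_ne_zero h1.2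
  have hΦinj : Function.Injective Φ := by
    intro t s hts
    have hmem : u + t • v ∈ Submodule.span k {u + s • v} := by
      rw [show Submodule.span k {u + s • v} = Φ s from rfl, ← hts]
      exact Submodule.mem_span_singleton_self _
    obtain ⟨cc, hcc⟩ := Submodule.mem_span_singleton.mp hmem
    have h0 : (cc - 1) • u + (cc * s - t) • v = 0 := by
      have hcalc : (cc - 1) • u + (cc * s - t) • v = cc • (u + s • v) - (u + t • v) := by
        module
      rw [hcalc, hcc, sub_self]
    obtain ⟨h1, h2⟩ := hindep2 _ _ h0
    have hcc1 : cc = 1 := sub_eq_zero.mp h1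
    rw [hcc1, one_mul] at h2
    exact (sub_eq_zero.mp h2).symm
  have hspanvne : ∀ t, Φ t ≠ Submodule.span k {v} := by
    intro t hts
    have hmem : v ∈ Φ t := by
      rw [hts]
      exact Submodule.mem_span_singleton_self _
    obtain ⟨cc, hcc⟩ := Submodule.mem_span_singleton.mp hmem
    have h0 : cc • u + (cc * t - 1) • v = 0 := by
      have hcalc : cc • u + (cc * t - 1) • v = cc • (u + t • v) - v := by module
      rw [hcalc, hcc, sub_self]
    obtain ⟨h1, h2⟩ := hindep2 _ _ h0
    rw [h1, zero_mul] at h2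
    norm_num at h2
  -- the root set
  set T : Set k := {t : k | q.eval t = 0} with hT
  have hTfin : T.Finite := by
    have : T = ↑q.roots.toFinset := by
      ext t
      simp [hT, Polynomial.mem_roots, hq0, Polynomial.IsRoot]
    rw [this]
    exact (q.roots.toFinset : Finset k).finite_toSet
  have hTcard : T.ncard ≤ q.natDegree := by
    have hTeq : T = ↑q.roots.toFinset := by
      ext t
      simp [hT, Polynomial.mem_roots, hq0, Polynomial.IsRoot]
    rw [hTeq, Set.ncard_coe_finset]
    exact le_trans (Multiset.toFinset_card_le _) (Polynomial.card_roots' q)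
  -- set identity
  have hSet : {L' : Submodule k (Fin 3 → k) | ∃ w : Fin 3 → k, w ≠ 0 ∧
        L' = Submodule.span k {w} ∧ Polynomial.X ^ 3 ∣ lineEval g p w}
      = Φ '' T ∪ (if eval v Q = 0 then {Submodule.span k {v}} else ∅) := by
    ext Lset
    simp only [Set.mem_setOf_eq, Set.mem_union, Set.mem_image]
    constructor
    · rintro ⟨w, hw0, rfl, hdvd⟩
      obtain ⟨hL0, hQ0⟩ := (hchar w).mp hdvd
      rw [hleval] at hL0
      obtain ⟨a, e', rfl⟩ := hdecomp w hL0
      rcases eq_or_ne a 0 with rfl | ha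
      · right
        have he' : e' ≠ 0 := by
          rintro rfl
          simp at hw0
        have hQv : eval v Q = 0 := by
          rw [zero_smul, zero_add, hscale] at hQ0
          exact (mul_eq_zero.mp hQ0).resolve_left (pow_ne_zero 2 he')
        rw [if_pos hQv]
        rw [zero_smul, zero_add]
        simp only [Set.mem_singleton_iff]
        exact (Submodule.span_singleton_smul_eq (IsUnit.mk0 e' he') v)
      · left
        refine ⟨a⁻¹ * e', ?_, ?_⟩
        · show q.eval _ = 0
          have hrw : u + (a⁻¹ * e') • v = a⁻¹ • (a • u + e' • v) := by
            rw [smul_add, smul_smul, inv_mul_cancel₀ ha, one_smul, smul_smul]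
          rw [hqeval, hrw, hscale, hQ0, mul_zero]
        · show Submodule.span k {u + (a⁻¹ * e') • v} = Submodule.span k {a • u + e' • v}
          have hrw : a • (u + (a⁻¹ * e') • v) = a • u + e' • v := by
            rw [smul_add, smul_smul, ← mul_assoc, mul_inv_cancel₀ ha, one_mul]
          rw [← hrw]
          exact (Submodule.span_singleton_smul_eq (IsUnit.mk0 a ha) _).symm
    · rintro (⟨t, ht, rfl⟩ | hE)
      · refine ⟨u + t • v, hune t, rfl, (hchar _).mpr ⟨?_, ?_⟩⟩
        · rw [hleval]
          simp [map_add, map_smul, hu, hv]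
        · rw [← hqeval]
          exact ht
      · by_cases hQv : eval v Q = 0
        · rw [if_pos hQv] at hE
          simp only [Set.mem_singleton_iff] at hE
          refine ⟨v, hvne, hE, (hchar v).mpr ⟨by rw [hleval]; exact hv, hQv⟩⟩
        · rw [if_neg hQv] at hE
          exact absurd hE (Set.notMem_empty _)
  rw [hSet]
  by_cases hQv : eval v Q = 0
  · rw [if_pos hQv]
    have hdeg1 : q.natDegree ≤ 1 := by
      rw [Polynomial.natDegree_le_iff_coeff_eq_zero]
      intro m hm
      rcases eq_or_ne m 2 with rfl | hm2
      · rw [hqc2]; exact hQv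
      · exact Polynomial.coeff_eq_zero_of_natDegree_lt (by omega)
    have hdisj : Disjoint (Φ '' T) {Submodule.span k {v}} := by
      rw [Set.disjoint_singleton_right]
      rintro ⟨t, _, him⟩
      exact hspanvne t him
    rw [Set.ncard_union_eq hdisj (hTfin.image Φ) (Set.finite_singleton _),
      Set.ncard_image_of_injective T hΦinj, Set.ncard_singleton]
    have := hTcard.trans hdeg1
    omega
  · rw [if_neg hQv]
    rw [Set.union_empty, Set.ncard_image_of_injective T hΦinj]
    have hdeg2 : q.natDegree = 2 :=
      le_antisymm hqdeg (Polynomial.le_natDegree_of_ne_zero (hqc2 ▸ hQv))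
    have hroot : ∃ t, t ∈ T := by
      obtain ⟨t, ht⟩ := IsAlgClosed.exists_root q (by
        rw [Polynomial.degree_eq_natDegree hq0, hdeg2]
        norm_num)
      exact ⟨t, ht⟩
    have h1 : 1 ≤ T.ncard := (Set.ncard_pos hTfin).mpr hroot
    have h2 : T.ncard ≤ 2 := hTcard.trans (by omega)
    omega
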